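/- arXiv:0901.3056 — 2 statements merged into one kernel-verified Lean document; each statement's English description precedes it below -/
import Mathlib

section
/- The function ⟨p, q⟩ := Σ_{x∈A} log( p(x)^{|A|} / Π_y p(y) ) · log( q(x)^{|A|} / Π_y q(y) ) is an inner product on the vector space V_A of strictly positive PMFs on A. -/
open Finset

/-- A strictly positive probability mass function on a finite alphabet. -/
def IsPPMF {A : Type*} [Fintype A] (p : A → ℝ) : Prop :=
  (∀ x, 0 < p x) ∧ ∑ x, p x = 1

/-- Addition of PMFs: normalized pointwise product. -/
noncomputable def padd {A : Type*} [Fintype A] (p q : A → ℝ) : A → ℝ :=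
  fun x => p x * q x / ∑ y, p y * q y

/-- Scalar multiplication of PMFs: normalized pointwise real power. -/
noncomputable def psmul {A : Type*} [Fintype A] (α : ℝ) (p : A → ℝ) : A → ℝ :=
  fun x => p x ^ α / ∑ y, p y ^ α

/-- The uniform PMF, the zero vector of the PMF vector space. -/
noncomputable def unif (A : Type*) [Fintype A] : A → ℝ :=
  fun _ => (Fintype.card A : ℝ)⁻¹

/-- The isometric map L from PMFs to ℝ^|A|. -/
noncomputable def Lmap {A : Type*} [Fintype A] (p : A → ℝ) : A → ℝ :=
  fun x => Real.log (p x ^ (Fintype.card A) / ∏ y, p y)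

/-- The inner product of two PMFs. -/
noncomputable def pinner {A : Type*} [Fintype A] (p q : A → ℝ) : ℝ :=
  ∑ x, Lmap p x * Lmap q x

/-
`Lmap` takes a strictly positive PMF to the centred vector of its log-likelihoods,
`Lmap p x = |A| log p x - Σ_y log p y`. It forgets normalising constants, turns
pointwise products into sums and powers into scalar multiples, so it is a linear map from
`(V_A, ⊞, ⊡)` to `ℝ^A`; it vanishes exactly on constant functions, i.e. on the uniform PMF.
The pairing `pinner` is the dot product pulled back along this injective linear map.
-/

section Lmap

variable {A : Type*} [Fintype A]

theorem pinner_eq_dotProduct (p q : A → ℝ) : pinner p q = Lmap p ⬝ᵥ Lmap q := rfl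

theorem Lmap_eq_card_mul_log_sub_sum_log {p : A → ℝ} (hp : ∀ x, 0 < p x) (x : A) :
    Lmap p x = Fintype.card A * Real.log (p x) - ∑ y, Real.log (p y) := by
  rw [Lmap, Real.log_div (pow_ne_zero _ (hp x).ne') (prod_pos fun y _ => hp y).ne',
    Real.log_pow, Real.log_prod fun y _ => (hp y).ne']

theorem Lmap_div_const {c : ℝ} (hc : c ≠ 0) (p : A → ℝ) :
    Lmap (fun x => p x / c) = Lmap p := by
  funext x
  rw [Lmap, Lmap, div_pow, prod_div_distrib, prod_const, card_univ,
    div_div_div_cancel_right₀ (pow_ne_zero _ hc)]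

theorem Lmap_mul {p q : A → ℝ} (hp : ∀ x, 0 < p x) (hq : ∀ x, 0 < q x) :
    Lmap (p * q) = Lmap p + Lmap q := by
  funext x
  have hpq : ∀ y, 0 < (p * q) y := fun y => mul_pos (hp y) (hq y)
  simp only [Pi.add_apply, Lmap_eq_card_mul_log_sub_sum_log hpq,
    Lmap_eq_card_mul_log_sub_sum_log hp, Lmap_eq_card_mul_log_sub_sum_log hq, Pi.mul_apply,
    Real.log_mul (hp _).ne' (hq _).ne', sum_add_distrib]
  ring

theorem Lmap_rpow (α : ℝ) {p : A → ℝ} (hp : ∀ x, 0 < p x) :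
    Lmap (fun x => p x ^ α) = α • Lmap p := by
  funext x
  simp only [Pi.smul_apply, smul_eq_mul,
    Lmap_eq_card_mul_log_sub_sum_log fun y => Real.rpow_pos_of_pos (hp y) α,
    Lmap_eq_card_mul_log_sub_sum_log hp, Real.log_rpow (hp _), ← mul_sum]
  ring

theorem Lmap_padd {p q : A → ℝ} (hp : ∀ x, 0 < p x) (hq : ∀ x, 0 < q x) :
    Lmap (padd p q) = Lmap p + Lmap q := by
  rcases isEmpty_or_nonempty A with hA | hA
  · exact funext isEmptyElim
  have hS : ∑ y, p y * q y ≠ 0 := (sum_pos (fun y _ => mul_pos (hp y) (hq y)) univ_nonempty).ne'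
  exact (Lmap_div_const hS (p * q)).trans (Lmap_mul hp hq)

theorem Lmap_psmul (α : ℝ) {p : A → ℝ} (hp : ∀ x, 0 < p x) :
    Lmap (psmul α p) = α • Lmap p := by
  rcases isEmpty_or_nonempty A with hA | hA
  · exact funext isEmptyElim
  have hS : ∑ y, p y ^ α ≠ 0 :=
    (sum_pos (fun y _ => Real.rpow_pos_of_pos (hp y) α) univ_nonempty).ne'
  exact (Lmap_div_const hS fun x => p x ^ α).trans (Lmap_rpow α hp)

theorem Lmap_const (c : ℝ) : Lmap (fun _ : A => c) = 0 := by
  funext x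
  rcases eq_or_ne c 0 with rfl | hc
  · simp [Lmap] -- junk values: `log (0 / 0) = log 0 = 0`
  · simp [Lmap, hc]

theorem forall_eq_of_Lmap_eq_zero {p : A → ℝ} (hp : ∀ x, 0 < p x) (h : Lmap p = 0) (x y : A) :
    p x = p y := by
  have hcard : (Fintype.card A : ℝ) ≠ 0 := by
    have : Nonempty A := ⟨x⟩
    exact_mod_cast Fintype.card_ne_zero
  have hx := congrFun h x
  have hy := congrFun h y
  rw [Pi.zero_apply, Lmap_eq_card_mul_log_sub_sum_log hp, sub_eq_zero] at hx hy
  exact Real.log_injOn_pos (hp x) (hp y) (mul_left_cancel₀ hcard (hx.trans hy.symm))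

theorem IsPPMF.eq_unif_of_forall_eq {p : A → ℝ} (hp : IsPPMF p) (hconst : ∀ x y, p x = p y) :
    p = unif A := by
  funext x
  have hsum : Fintype.card A * p x = 1 := by
    rw [← hp.2, ← nsmul_eq_mul, ← card_univ, ← sum_const]
    exact sum_congr rfl fun y _ => hconst x y
  rw [unif, eq_inv_of_mul_eq_one_right hsum]

theorem IsPPMF.Lmap_eq_zero_iff {p : A → ℝ} (hp : IsPPMF p) : Lmap p = 0 ↔ p = unif A := by
  refine ⟨fun h => hp.eq_unif_of_forall_eq (forall_eq_of_Lmap_eq_zero hp.1 h), ?_⟩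
  rintro rfl
  exact Lmap_const _

end Lmap

/-- `⟨p,q⟩ = Σ_x L(p)_x L(q)_x` is an inner product on the vector space of
strictly positive PMFs: it is symmetric, additive and homogeneous (w.r.t. the
PMF operations ⊞, ⊡) in the first argument, nonnegative on the diagonal, and
definite (vanishing only at the zero vector, the uniform PMF). -/
theorem stmt_5 {A : Type*} [Fintype A] :
    (∀ p q : A → ℝ, IsPPMF p → IsPPMF q → pinner p q = pinner q p) ∧
    (∀ p q r : A → ℝ, IsPPMF p → IsPPMF q → IsPPMF r →
      pinner (padd p q) r = pinner p r + pinner q r) ∧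
    (∀ (α : ℝ) (p q : A → ℝ), IsPPMF p → IsPPMF q →
      pinner (psmul α p) q = α * pinner p q) ∧
    (∀ p : A → ℝ, IsPPMF p → 0 ≤ pinner p p) ∧
    (∀ p : A → ℝ, IsPPMF p → (pinner p p = 0 ↔ p = unif A)) := by
  simp only [pinner_eq_dotProduct]
  refine ⟨fun p q _ _ => dotProduct_comm _ _, fun p q r hp hq _ => ?_,
    fun α p q hp _ => ?_, fun p _ => ?_, fun p hp => ?_⟩
  · rw [Lmap_padd hp.1 hq.1, add_dotProduct]
  · rw [Lmap_psmul α hp.1, smul_dotProduct, smul_eq_mul]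
  · simpa using dotProduct_self_star_nonneg (Lmap p)
  · rw [dotProduct_self_eq_zero, hp.Lmap_eq_zero_iff]
end

section
/- Let F be a finite field of order m and a, b ∈ F^N nonzero vectors such that a ≠ α b for every α ∈ F. Then the subspaces V_{F^N}^a and V_{F^N}^b of soft parity check interactions are orthogonal with respect to the inner product ⟨p_1, p_2⟩ = Σ_{x∈F^N} log( p_1(x)^{m^N} / Π_y p_1(y) ) · log( p_2(x)^{m^N} / Π_y p_2(y) ). -/
open Finset

/-- The dot product `a·x = Σ_k a_k x_k` over a field `F`. -/
def adot {F : Type*} [Field F] {N : ℕ} (a x : Fin N → F) : F :=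
  ∑ k, a k * x k

/-- The soft parity check interaction with coefficient vector `a` and
underlying PMF `q`: `p(x) = |F|^{-(N-1)} q(a·x)`. -/
noncomputable def spci {F : Type*} [Field F] [Fintype F] {N : ℕ}
    (a : Fin N → F) (q : F → ℝ) : (Fin N → F) → ℝ :=
  fun x => ((Fintype.card F : ℝ) ^ (N - 1))⁻¹ * q (adot a x)

/-- The `i`-th one-dimensional marginal of a joint PMF `p` on `F^N`. -/
noncomputable def marginal {F : Type*} [Field F] [Fintype F] [DecidableEq F] {N : ℕ}
    (p : (Fin N → F) → ℝ) (i : Fin N) : F → ℝ :=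
  fun t => ∑ x : Fin N → F, if x i = t then p x else 0

/-!
Write `M = |F^N|`. For a nowhere-vanishing `p`, the coordinates `L(p)(x) = M log p(x) - log ∏_y p(y)`
sum to zero. An interaction `spci a q` factors through `x ↦ a·x`, so `L` of it is `φ(a·x)` for a
function `φ` on `F`; since the surjective homomorphism `x ↦ a·x` has fibres of equal size, `φ`
itself sums to zero. When `a` and `b` are linearly independent, `x ↦ (a·x, b·x)` is a surjective
homomorphism onto `F × F`, so `⟨L(spci a q₁), L(spci b q₂)⟩ = |ker| · (∑ φ) (∑ ψ) = 0`.
-/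

theorem sum_Lmap_eq_zero {A : Type*} [Fintype A] (p : A → ℝ) (hp : ∀ x, p x ≠ 0) :
    ∑ x, Lmap p x = 0 := by
  have hprod : ∏ y, p y ≠ 0 := prod_ne_zero_iff.2 fun y _ => hp y
  simp only [Lmap, Real.log_div (pow_ne_zero _ (hp _)) hprod, Real.log_pow,
    Real.log_prod fun y _ => hp y]
  rw [sum_sub_distrib, ← mul_sum, sum_const, card_univ, nsmul_eq_mul, sub_self]

theorem AddMonoidHom.sum_comp_of_surjective {G H M : Type*} [AddGroup G] [AddGroup H]
    [Fintype G] [Fintype H] [AddCommMonoid M] {f : G →+ H} (hf : Function.Surjective f)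
    (h : H → M) : ∑ x, h (f x) = Nat.card f.ker • ∑ v, h v := by
  classical
  rw [← Fintype.sum_fiberwise' f h, smul_sum]
  refine sum_congr rfl fun v _ => ?_
  rw [sum_const, card_univ, ← Nat.card_eq_fintype_card]
  congr 1
  exact Nat.card_congr (f.fiberEquivKerOfSurjective hf v)

theorem sum_log_pow_div_prod_comp_eq_zero {G H : Type*} [AddGroup G] [AddGroup H]
    [Fintype G] [Fintype H] {f : G →+ H} (hf : Function.Surjective f) (u : H → ℝ)
    (hu : ∀ t, u t ≠ 0) :
    ∑ t, Real.log (u t ^ Fintype.card G / ∏ y, u (f y)) = 0 := by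
  have h : ∑ x, Real.log (u (f x) ^ Fintype.card G / ∏ y, u (f y)) = 0 :=
    sum_Lmap_eq_zero (u ∘ f) fun x => hu (f x)
  rw [f.sum_comp_of_surjective hf fun t => Real.log (u t ^ Fintype.card G / ∏ y, u (f y))] at h
  exact (smul_eq_zero.1 h).resolve_left Nat.card_pos.ne'

theorem pinner_comp_fst_comp_snd_eq_zero {G H₁ H₂ : Type*} [AddGroup G] [AddGroup H₁]
    [AddGroup H₂] [Fintype G] [Fintype H₁] [Fintype H₂] {P : G →+ H₁ × H₂}
    (hP : Function.Surjective P) (u : H₁ → ℝ) (hu : ∀ t, u t ≠ 0) (v : H₂ → ℝ) :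
    pinner (fun x => u (P x).1) (fun x => v (P x).2) = 0 := by
  set φ : H₁ → ℝ := fun t => Real.log (u t ^ Fintype.card G / ∏ y, u (P y).1)
  set ψ : H₂ → ℝ := fun t => Real.log (v t ^ Fintype.card G / ∏ y, v (P y).2)
  have hφ : ∑ t, φ t = 0 :=
    sum_log_pow_div_prod_comp_eq_zero (f := (AddMonoidHom.fst H₁ H₂).comp P)
      (Prod.fst_surjective.comp hP) u hu
  calc pinner (fun x => u (P x).1) (fun x => v (P x).2)
      = ∑ x, φ (P x).1 * ψ (P x).2 := rfl
    _ = Nat.card P.ker • ∑ w : H₁ × H₂, φ w.1 * ψ w.2 :=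
      P.sum_comp_of_surjective hP fun w => φ w.1 * ψ w.2
    _ = 0 := by rw [Fintype.sum_prod_type, ← sum_mul_sum, hφ, zero_mul, smul_zero]

theorem Matrix.mulVec_surjective_of_linearIndependent_row {K m n : Type*} [Field K]
    [Fintype m] [Fintype n] {A : Matrix m n K} (hA : LinearIndependent K A.row) :
    Function.Surjective A.mulVec := by
  have hrange : LinearMap.range A.mulVecLin = ⊤ := by
    apply Submodule.eq_top_of_finrank_eq
    rw [Module.finrank_fintype_fun_eq_card, ← hA.rank_matrix, Matrix.rank]
  exact LinearMap.range_eq_top.1 hrange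

theorem surjective_dotProduct_prod {K n : Type*} [Field K] [Fintype n] {a b : n → K}
    (hab : LinearIndependent K ![a, b]) :
    Function.Surjective fun x : n → K => (a ⬝ᵥ x, b ⬝ᵥ x) :=
  (piFinTwoEquiv fun _ => K).surjective.comp
    (Matrix.mulVec_surjective_of_linearIndependent_row (A := Matrix.of ![a, b]) hab)

theorem stmt_13_general {F : Type*} [Field F] [Fintype F] {N : ℕ}
    (a b : Fin N → F) (hb : b ≠ 0) (hind : ∀ α : F, a ≠ α • b)
    (q₁ q₂ : F → ℝ) (hq₁ : IsPPMF q₁) :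
    pinner (spci a q₁) (spci b q₂) = 0 := by
  have hab : LinearIndependent F ![a, b] :=
    LinearIndependent.pair_symm_iff.1 <| (LinearIndependent.pair_iff' hb).2 fun α => (hind α).symm
  let P : (Fin N → F) →+ F × F :=
    AddMonoidHom.mk' (fun x => (a ⬝ᵥ x, b ⬝ᵥ x)) fun x y => by simp [dotProduct_add]
  have hc : ((Fintype.card F : ℝ) ^ (N - 1))⁻¹ ≠ 0 := by positivity
  exact pinner_comp_fst_comp_snd_eq_zero (P := P) (surjective_dotProduct_prod hab)
    (fun t => ((Fintype.card F : ℝ) ^ (N - 1))⁻¹ * q₁ t) (fun t => mul_ne_zero hc (hq₁.1 t).ne')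
    (fun t => ((Fintype.card F : ℝ) ^ (N - 1))⁻¹ * q₂ t)

/-- If `a ≠ α b` for every `α ∈ F`, then the SPCI subspaces `V_{F^N}^a` and
`V_{F^N}^b` are orthogonal with respect to the PMF inner product. -/
theorem stmt_13 {F : Type*} [Field F] [Fintype F] {N : ℕ}
    (a b : Fin N → F) (ha : a ≠ 0) (hb : b ≠ 0) (hind : ∀ α : F, a ≠ α • b)
    (q₁ q₂ : F → ℝ) (hq₁ : IsPPMF q₁) (hq₂ : IsPPMF q₂) :
    pinner (spci a q₁) (spci b q₂) = 0 :=
  stmt_13_general a b hb hind q₁ q₂ hq₁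
end
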